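/- Sensitivity under global change: Let M be a loopless matroid, x : E → ℝ a weighting, and B an x-optimal basis. If a weighting x' satisfies |x'(e) - x(e)| ≤ (1/2)|μ_e(x) - x(e)| for every element e ∈ E, then B is also x'-optimal. -/

import Mathlib

/-!
Let `y = (x + μ(x)) / 2`. For an exchange `B - e + f` (`e ∈ B`, `f ∉ B`) one has
`μ_e(x) ≤ x(f)`, via the fundamental circuit of `f`, and `x(e) ≤ μ_f(x)`, because every circuit
through `f` contains another element `g` for which `B - e + g` is a base. Hence `y(e) ≤ y(f)`;
since a base that no single exchange improves is optimal, `B` is `y`-optimal. As `x ≤ μ(x)` on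
`B` and `μ(x) ≤ x` off `B`, the hypothesis gives `x' ≤ y` on `B` and `y ≤ x'` off `B`, so `B`
stays `x'`-optimal.
-/

open Matroid Set

variable {α : Type*}

/-- A circuit of a matroid: a minimal dependent set. -/
def Matroid.IsCircuit' (M : Matroid α) (C : Set α) : Prop :=
  M.Dep C ∧ ∀ ⦃D⦄, D ⊂ C → M.Indep D

/-- Looplessness in the sense of the paper: no element is a loop
(every singleton of the ground set is independent) and no element is a
coloop (no element lies in all bases). -/
def Matroid.PaperLoopless (M : Matroid α) : Prop :=
  ∀ e ∈ M.E, M.Indep {e} ∧ ∃ B, M.IsBase B ∧ e ∉ B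

/-- The weight `x(B)` of a set of ground elements. -/
noncomputable def setWeight (x : α → ℝ) (B : Set α) : ℝ := ∑ᶠ e ∈ B, x e

/-- The min-max weight `μ_e(x)`: the minimum over circuits `C` containing `e`
of the maximum weight of an element of `C - e`. -/
noncomputable def muWeight (M : Matroid α) (x : α → ℝ) (e : α) : ℝ :=
  sInf {w | ∃ C, M.IsCircuit' C ∧ e ∈ C ∧ w = sSup (x '' (C \ {e}))}

/-- The bottleneck weight `b_e(x) = min {x(e), μ_e(x)}`. -/
noncomputable def bottleneck (M : Matroid α) (x : α → ℝ) (e : α) : ℝ :=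
  min (x e) (muWeight M x e)

/-- The minimum weight of a basis of `M`. -/
noncomputable def mwb (M : Matroid α) (x : α → ℝ) : ℝ :=
  sInf {w | ∃ B, M.IsBase B ∧ w = setWeight x B}

/-- `B` is an `x`-optimal basis of `M`. -/
def IsOptimalBase (M : Matroid α) (x : α → ℝ) (B : Set α) : Prop :=
  M.IsBase B ∧ ∀ B', M.IsBase B' → setWeight x B ≤ setWeight x B'

/-- Deletion of a single element. -/
noncomputable def Matroid.del (M : Matroid α) (e : α) : Matroid α :=
  M ↾ (M.E \ {e})

/-- Contraction of a single element, defined by duality: `M/e = (M✶ \ e)✶`. -/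
noncomputable def Matroid.con (M : Matroid α) (e : α) : Matroid α :=
  ((M✶ ↾ (M.E \ {e}))✶)

namespace Matroid

variable {M : Matroid α} {B C X : Set α} {e f : α}

lemma isCircuit'_iff_isCircuit : M.IsCircuit' C ↔ M.IsCircuit C :=
  isCircuit_iff_forall_ssubset.symm

lemma IsCircuit.exists_ne_notMem_closure (hC : M.IsCircuit C) (heC : e ∈ C)
    (he : e ∉ M.closure X) : ∃ f ∈ C, f ≠ e ∧ f ∉ M.closure X := by
  by_contra! h
  have hCe : C \ {e} ⊆ M.closure X := fun f hf => h f hf.1 hf.2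
  exact he (M.closure_subset_closure_of_subset_closure hCe
    (hC.mem_closure_sdiff_singleton_of_mem heC))

lemma IsBase.mem_fundCircuit_iff_notMem_closure (hB : M.IsBase B) (hfE : f ∈ M.E) (hfB : f ∉ B)
    (heB : e ∈ B) : e ∈ M.fundCircuit f B ↔ f ∉ M.closure (B \ {e}) := by
  have hfe : f ≠ e := fun h => hfB (h ▸ heB)
  rw [hB.indep.mem_fundCircuit_iff (by rw [hB.closure_eq]; exact hfE) hfB,
    ← insert_sdiff_singleton_comm hfe, (hB.indep.sdiff _).insert_indep_iff_of_notMem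
    (fun h => hfB h.1), mem_sdiff, and_iff_right hfE]

lemma notMem_of_notMem_closure_sdiff_singleton (hBE : B ⊆ M.E) (hf : f ∉ M.closure (B \ {e}))
    (hfe : f ≠ e) : f ∉ B :=
  fun hfB => hf (M.mem_closure_of_mem' ⟨hfB, hfe⟩ (hBE hfB))

lemma PaperLoopless.sdiff_singleton_nonempty (hM : M.PaperLoopless) (hC : M.IsCircuit C)
    (heC : e ∈ C) : (C \ {e}).Nonempty := by
  rw [nonempty_iff_ne_empty, Ne, sdiff_eq_empty]
  exact fun hCe => hC.not_indep ((hM e (hC.subset_ground heC)).1.subset hCe)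

lemma PaperLoopless.exists_isCircuit_mem (hM : M.PaperLoopless) (he : e ∈ M.E) :
    ∃ C, M.IsCircuit C ∧ e ∈ C := by
  obtain ⟨-, B, hB, heB⟩ := hM e he
  exact ⟨_, hB.fundCircuit_isCircuit he heB, M.mem_fundCircuit e B⟩

end Matroid

section Weights

variable {M : Matroid α} {B C : Set α} {e f : α} {x y : α → ℝ}

lemma finsum_mem_le_finsum_mem {s : Set α} (hs : s.Finite) (h : ∀ i ∈ s, x i ≤ y i) :
    ∑ᶠ i ∈ s, x i ≤ ∑ᶠ i ∈ s, y i := by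
  rw [finsum_mem_eq_finite_toFinset_sum _ hs, finsum_mem_eq_finite_toFinset_sum _ hs]
  exact Finset.sum_le_sum fun i hi => h i (hs.mem_toFinset.1 hi)

lemma setWeight_insert_sdiff (hB : B.Finite) (he : e ∈ B) (hf : f ∉ B) :
    setWeight x (insert f (B \ {e})) = setWeight x B - x e + x f := by
  have hB' : setWeight x B = x e + setWeight x (B \ {e}) := by
    rw [setWeight, setWeight, ← finsum_mem_insert x (s := B \ {e}) (by simp) hB.sdiff,
      insert_sdiff_singleton, insert_eq_of_mem he]
  rw [hB', setWeight, finsum_mem_insert x (fun h => hf h.1) hB.sdiff, setWeight]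
  ring

lemma muWeight_le [M.Finite] (hC : M.IsCircuit C) (he : e ∈ C) :
    muWeight M x e ≤ sSup (x '' (C \ {e})) := by
  refine csInf_le ?_ ⟨C, isCircuit'_iff_isCircuit.2 hC, he, rfl⟩
  refine ((M.ground_finite.finite_subsets.image fun C => sSup (x '' (C \ {e}))).subset ?_).bddBelow
  rintro _ ⟨C, hC, -, rfl⟩
  exact ⟨C, hC.1.subset_ground, rfl⟩

lemma le_muWeight {a : ℝ} (hex : ∃ C, M.IsCircuit C ∧ e ∈ C)
    (h : ∀ C, M.IsCircuit C → e ∈ C → a ≤ sSup (x '' (C \ {e}))) : a ≤ muWeight M x e := by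
  obtain ⟨C₀, hC₀, he₀⟩ := hex
  refine le_csInf ⟨_, C₀, isCircuit'_iff_isCircuit.2 hC₀, he₀, rfl⟩ ?_
  rintro _ ⟨C, hC, heC, rfl⟩
  exact h C (isCircuit'_iff_isCircuit.1 hC) heC

noncomputable def midpointWeight (M : Matroid α) (x : α → ℝ) (e : α) : ℝ :=
  (x e + muWeight M x e) / 2

end Weights

section Optimality

variable {M : Matroid α} [M.Finite] {B : Set α} {e f : α} {x y : α → ℝ}

lemma IsOptimalBase.le_of_notMem_closure (hB : IsOptimalBase M x B) (he : e ∈ B)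
    (hfE : f ∈ M.E) (hf : f ∉ M.closure (B \ {e})) : x e ≤ x f := by
  obtain rfl | hfe := eq_or_ne f e
  · exact le_rfl
  have hfB := notMem_of_notMem_closure_sdiff_singleton hB.1.subset_ground hf hfe
  have h := hB.2 _ (hB.1.exchange_base_of_notMem_closure he hf hfE)
  rw [setWeight_insert_sdiff (M.set_finite B hB.1.subset_ground) he hfB] at h
  linarith

lemma isOptimalBase_of_forall_notMem_closure (hB : M.IsBase B)
    (h : ∀ e ∈ B, ∀ f ∈ M.E, f ∉ M.closure (B \ {e}) → y e ≤ y f) : IsOptimalBase M y B := by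
  refine ⟨hB, fun B' hB' => ?_⟩
  induction hn : (B' \ B).ncard using Nat.strong_induction_on generalizing B' with
  | _ n ih =>
  by_cases hBB' : B ⊆ B'
  · rw [hB.eq_of_subset_isBase hB' hBB']
  obtain ⟨e, heB, heB'⟩ := not_subset.1 hBB'
  have heE := hB.subset_ground heB
  -- A symmetric exchange: both `B - e + f` and `B' - f + e` are bases.
  obtain ⟨f, hfC, hfe, hf⟩ := (hB'.fundCircuit_isCircuit heE heB').exists_ne_notMem_closure
    (M.mem_fundCircuit e B') (hB.indep.notMem_closure_sdiff_of_mem heB)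
  have hfB' : f ∈ B' := ((M.fundCircuit_subset_insert e B') hfC).resolve_left hfe
  have hfB := notMem_of_notMem_closure_sdiff_singleton hB.subset_ground hf hfe
  have hB'' : M.IsBase (insert e (B' \ {f})) := hB'.exchange_isBase_of_indep heB' <| by
    rwa [insert_sdiff_singleton_comm hfe.symm, ← hB'.indep.mem_fundCircuit_iff
      (by rw [hB'.closure_eq]; exact heE) heB']
  have hlt : (insert e (B' \ {f}) \ B).ncard < n := by
    rw [insert_sdiff_of_mem _ heB, sdiff_right_comm, ← hn]
    exact ncard_sdiff_singleton_lt_of_mem ⟨hfB', hfB⟩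
      (M.set_finite _ (sdiff_subset.trans hB'.subset_ground))
  calc setWeight y B ≤ setWeight y (insert e (B' \ {f})) := ih _ hlt _ hB'' rfl
    _ = setWeight y B' - y f + y e :=
        setWeight_insert_sdiff (M.set_finite B' hB'.subset_ground) hfB' heB'
    _ ≤ setWeight y B' := by linarith [h e heB f (hB'.subset_ground hfB') hf]

lemma IsOptimalBase.of_le_of_le (hy : IsOptimalBase M y B) (hle : ∀ e ∈ B, x e ≤ y e)
    (hge : ∀ f ∈ M.E \ B, y f ≤ x f) : IsOptimalBase M x B := by
  refine ⟨hy.1, fun B' hB' => ?_⟩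
  have hBfin := M.set_finite B hy.1.subset_ground
  have hB'fin := M.set_finite B' hB'.subset_ground
  have h₁ : ∑ᶠ e ∈ B \ B', x e ≤ ∑ᶠ e ∈ B \ B', y e :=
    finsum_mem_le_finsum_mem hBfin.sdiff fun e he => hle e he.1
  have h₂ : ∑ᶠ f ∈ B' \ B, y f ≤ ∑ᶠ f ∈ B' \ B, x f :=
    finsum_mem_le_finsum_mem hB'fin.sdiff fun f hf => hge f ⟨hB'.subset_ground hf.1, hf.2⟩
  have h₃ := hy.2 B' hB'
  simp only [setWeight] at h₃ ⊢
  rw [← finsum_mem_inter_add_sdiff B' hBfin, ← finsum_mem_inter_add_sdiff B hB'fin,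
    inter_comm B'] at h₃ ⊢
  linarith

lemma IsOptimalBase.le_muWeight_of_notMem_closure (hM : M.PaperLoopless)
    (hB : IsOptimalBase M x B) (he : e ∈ B) (hfE : f ∈ M.E) (hf : f ∉ M.closure (B \ {e})) :
    x e ≤ muWeight M x f := by
  refine le_muWeight (hM.exists_isCircuit_mem hfE) fun C hC hfC => ?_
  obtain ⟨g, hgC, hgf, hg⟩ := hC.exists_ne_notMem_closure hfC hf
  exact (hB.le_of_notMem_closure he (hC.subset_ground hgC) hg).trans
    (le_csSup ((M.set_finite C hC.subset_ground).sdiff.image x).bddAbove ⟨g, ⟨hgC, hgf⟩, rfl⟩)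

lemma IsOptimalBase.le_muWeight (hM : M.PaperLoopless) (hB : IsOptimalBase M x B)
    (he : e ∈ B) : x e ≤ muWeight M x e :=
  hB.le_muWeight_of_notMem_closure hM he (hB.1.subset_ground he)
    (hB.1.indep.notMem_closure_sdiff_of_mem he)

lemma IsOptimalBase.muWeight_le_of_mem_fundCircuit (hM : M.PaperLoopless)
    (hB : IsOptimalBase M x B) (hfE : f ∈ M.E) (hfB : f ∉ B) (he : e ∈ M.fundCircuit f B) :
    muWeight M x e ≤ x f := by
  have hC := hB.1.fundCircuit_isCircuit hfE hfB
  refine (muWeight_le hC he).trans <| csSup_le ((hM.sdiff_singleton_nonempty hC he).image x) ?_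
  rintro _ ⟨g, ⟨hgC, -⟩, rfl⟩
  obtain rfl | hgB := (M.fundCircuit_subset_insert f B) hgC
  · exact le_rfl
  exact hB.le_of_notMem_closure hgB hfE
    ((hB.1.mem_fundCircuit_iff_notMem_closure hfE hfB hgB).1 hgC)

lemma IsOptimalBase.muWeight_le (hM : M.PaperLoopless) (hB : IsOptimalBase M x B)
    (hfE : f ∈ M.E) (hfB : f ∉ B) : muWeight M x f ≤ x f :=
  hB.muWeight_le_of_mem_fundCircuit hM hfE hfB (M.mem_fundCircuit f B)

lemma IsOptimalBase.isOptimalBase_midpointWeight (hM : M.PaperLoopless) (hB : IsOptimalBase M x B) :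
    IsOptimalBase M (midpointWeight M x) B := by
  refine isOptimalBase_of_forall_notMem_closure hB.1 fun e he f hfE hf => ?_
  obtain rfl | hfe := eq_or_ne f e
  · exact le_rfl
  have hfB := notMem_of_notMem_closure_sdiff_singleton hB.1.subset_ground hf hfe
  have h₁ := hB.muWeight_le_of_mem_fundCircuit hM hfE hfB
    ((hB.1.mem_fundCircuit_iff_notMem_closure hfE hfB he).2 hf)
  have h₂ := hB.le_muWeight_of_notMem_closure hM he hfE hf
  unfold midpointWeight
  linarith

end Optimality

theorem stmt17_general (M : Matroid α) [M.Finite] (hM : M.PaperLoopless)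
    (x x' : α → ℝ) {B : Set α} (hB : IsOptimalBase M x B)
    (hdiff : ∀ e ∈ M.E, |x' e - x e| ≤ |muWeight M x e - x e| / 2) :
    IsOptimalBase M x' B := by
  refine (hB.isOptimalBase_midpointWeight hM).of_le_of_le (fun e he => ?_) (fun f ⟨hfE, hfB⟩ => ?_)
  · have hμ := hB.le_muWeight hM he
    have hx' := (abs_le.1 (hdiff e (hB.1.subset_ground he))).2
    rw [abs_of_nonneg (sub_nonneg.2 hμ)] at hx'
    unfold midpointWeight
    linarith
  · have hμ := hB.muWeight_le hM hfE hfB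
    have hx' := (abs_le.1 (hdiff f hfE)).1
    rw [abs_of_nonpos (sub_nonpos.2 hμ)] at hx'
    unfold midpointWeight
    linarith

/-- global sensitivity: changes by at most half the tolerance
preserve optimality. -/
theorem stmt17 (M : Matroid α) [M.Finite] (hM : M.PaperLoopless)
    (x x' : α → ℝ) {B : Set α} (hB : IsOptimalBase M x B)
    (hdiff : ∀ e ∈ M.E, |x' e - x e| ≤ |muWeight M x e - x e| / 2)
    (hout : ∀ e ∉ M.E, x' e = x e) :
    IsOptimalBase M x' B :=
  stmt17_general M hM x x' hB hdiff
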